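/- arXiv:1009.3304 — 7 statements merged into one kernel-verified Lean document; each statement's English description precedes it below -/
import Mathlib

section
/- Let n ≥ 2, let i < n, and let h be a Hamiltonian cycle of the hypercube Q_n. Then the number of i-th dimension edges of h whose parity is 0 equals the number of i-th dimension edges of h whose parity is 1. That is, among the edges {v, v + e_i} belonging to h, exactly half have par_{i,n}(v) = 0 and exactly half have par_{i,n}(v) = 1. -/
/-- The `n`-dimensional hypercube graph: vertices are vectors in `Fin n → ZMod 2`,
two vertices adjacent iff they differ in exactly one coordinate. -/
def Q (n : ℕ) : SimpleGraph (Fin n → ZMod 2) where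
  Adj u v := ∃ i : Fin n, v = u + Pi.single i 1
  symm := by
    constructor
    rintro u v ⟨i, rfl⟩
    refine ⟨i, funext fun j => ?_⟩
    by_cases hj : j = i <;> simp [Pi.single_apply, hj]
    · exact (by decide : ∀ a : ZMod 2, a = a + 1 + 1) _
  loopless := by
    constructor
    rintro u ⟨i, hi⟩
    have := congrFun hi i
    simp [Pi.single_apply] at this

/-- `e` is an `i`-th dimension edge of the hypercube. -/
def isDimEdge {n : ℕ} (i : Fin n) (e : Sym2 (Fin n → ZMod 2)) : Prop :=
  ∃ w : Fin n → ZMod 2, e = s(w, w + Pi.single i 1)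

instance {n : ℕ} (i : Fin n) : DecidablePred (isDimEdge i) := fun e =>
  inferInstanceAs (Decidable (∃ w : Fin n → ZMod 2, e = s(w, w + Pi.single i 1)))

/-- The number of `i`-th dimension edges in a closed walk (entry `cᵢ` of the
chromatic vector when the walk is a Hamiltonian cycle). -/
def dimCount {n : ℕ} (i : Fin n) {u : Fin n → ZMod 2} (p : (Q n).Walk u u) : ℕ :=
  p.edges.countP (fun e => decide (isDimEdge i e))

/-- Parity of `v` ignoring the `i`-th coordinate: the number of coordinates
`j ≠ i` with `v j = 1`, modulo 2. -/
def parI {n : ℕ} (i : Fin n) (v : Fin n → ZMod 2) : ZMod 2 :=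
  ∑ j ∈ Finset.univ.erase i, v j

/-!
Walking once around a Hamiltonian cycle, every vertex is left exactly once and entered exactly
once. A step along dimension `i` keeps `parI i`, every other step flips it, so the darts leaving
a vertex of parity `0` are the `i`-edges of parity `0` together with the `0 → 1` steps, and the
darts entering a vertex of parity `1` are the `i`-edges of parity `1` together with the same
`0 → 1` steps. Both totals equal the number of vertices of the respective parity, and these two
numbers agree because flipping a coordinate `j ≠ i` swaps the two classes.
-/

open Finset

theorem List.countP_eq_countP_and_add_countP_and_not {α : Type*} (l : List α)
    (p q : α → Prop) [DecidablePred p] [DecidablePred q] :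
    l.countP (fun a => p a) = l.countP (fun a => p a ∧ q a) + l.countP (fun a => p a ∧ ¬q a) := by
  induction l with
  | nil => simp
  | cons a l ih => by_cases hp : p a <;> by_cases hq : q a <;> simp [*] <;> omega

theorem List.countP_eq_card_filter_of_forall_count_eq_one {V : Type*} [Fintype V] [DecidableEq V]
    {l : List V} (hl : ∀ v, l.count v = 1) (P : V → Prop) [DecidablePred P] :
    l.countP (fun v => P v) = #{v | P v} := by
  have hl : (l : Multiset V) = univ.val :=
    Multiset.ext.mpr fun v => by rw [Multiset.coe_count, hl v, Multiset.count_univ]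
  rw [← Multiset.coe_countP, hl, Multiset.countP_eq_card_filter]
  rfl

namespace SimpleGraph.Walk

variable {V : Type*} {G : SimpleGraph V} {u : V}

theorem map_fst_darts_perm_map_snd_darts (p : G.Walk u u) :
    (p.darts.map (·.fst)).Perm (p.darts.map (·.snd)) := by
  have h : p.darts.map (·.fst) ++ [u] = u :: p.darts.map (·.snd) := by
    rw [map_fst_darts_append, cons_map_snd_darts]
  have hperm := List.perm_append_singleton u (p.darts.map (·.fst))
  rw [h] at hperm
  exact ((List.perm_cons u).mp hperm).symm

variable [DecidableEq V] {p : G.Walk u u}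

theorem IsHamiltonianCycle.count_map_snd_darts (hp : p.IsHamiltonianCycle) (v : V) :
    (p.darts.map (·.snd)).count v = 1 := by
  rw [map_snd_darts, ← support_tail_of_not_nil _ hp.not_nil]
  exact hp.isHamiltonian_tail v

theorem IsHamiltonianCycle.count_map_fst_darts (hp : p.IsHamiltonianCycle) (v : V) :
    (p.darts.map (·.fst)).count v = 1 := by
  rw [p.map_fst_darts_perm_map_snd_darts.count_eq]
  exact hp.count_map_snd_darts v

theorem IsHamiltonianCycle.countP_darts_and_eq_countP_darts_not_and_not [Fintype V]
    (hp : p.IsHamiltonianCycle) (P : V → Prop) [DecidablePred P]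
    (hP : #{v | P v} = #{v | ¬P v}) :
    p.darts.countP (fun d => P d.fst ∧ P d.snd) =
      p.darts.countP (fun d => ¬P d.fst ∧ ¬P d.snd) := by
  have hfst : p.darts.countP (fun d => P d.fst) = #{v | P v} := by
    rw [← List.countP_eq_card_filter_of_forall_count_eq_one hp.count_map_fst_darts,
      List.countP_map]
    rfl
  have hsnd : p.darts.countP (fun d => ¬P d.snd) = #{v | ¬P v} := by
    rw [← List.countP_eq_card_filter_of_forall_count_eq_one hp.count_map_snd_darts,
      List.countP_map]
    rfl
  have hsplit_fst := p.darts.countP_eq_countP_and_add_countP_and_not (P ·.fst) (P ·.snd)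
  have hsplit_snd := p.darts.countP_eq_countP_and_add_countP_and_not (¬P ·.snd) (¬P ·.fst)
  have hswap (Q R : G.Dart → Prop) [DecidablePred Q] [DecidablePred R] :
      p.darts.countP (fun d => Q d ∧ R d) = p.darts.countP (fun d => R d ∧ Q d) :=
    List.countP_congr fun d _ => by simp [and_comm]
  simp only [not_not] at hsplit_snd
  rw [hswap (¬P ·.snd), hswap (¬P ·.snd)] at hsplit_snd
  omega

end SimpleGraph.Walk

theorem parI_add_single {n : ℕ} (i j : Fin n) (v : Fin n → ZMod 2) :
    parI i (v + Pi.single j 1) = parI i v + if j = i then 0 else 1 := by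
  unfold parI
  simp only [Pi.add_apply]
  rw [sum_add_distrib, sum_pi_single']
  by_cases hj : j = i <;> simp [hj]

theorem card_parI_eq_zero_eq_card_parI_ne_zero {n : ℕ} (hn : 2 ≤ n) (i : Fin n) :
    #{v : Fin n → ZMod 2 | parI i v = 0} = #{v | ¬parI i v = 0} := by
  have : Nontrivial (Fin n) := Fin.nontrivial_iff_two_le.mpr hn
  obtain ⟨j, hj⟩ := exists_ne i
  refine card_equiv (Equiv.addRight (Pi.single j 1)) fun v => ?_
  simp only [mem_filter, mem_univ, true_and, Equiv.coe_addRight, parI_add_single, hj, if_false]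
  generalize parI i v = a
  revert a
  decide

theorem exists_dart_edge_eq_and_parI_eq_iff {n : ℕ} (i : Fin n) (c : ZMod 2) (d : (Q n).Dart) :
    (∃ w, d.edge = s(w, w + Pi.single i 1) ∧ parI i w = c) ↔
      parI i d.fst = c ∧ parI i d.snd = c := by
  obtain ⟨j, hd⟩ : ∃ j, d.snd = d.fst + Pi.single j 1 := d.adj
  change (∃ w, s(d.fst, d.snd) = _ ∧ _) ↔ _
  constructor
  · rintro ⟨w, he, rfl⟩
    rcases Sym2.eq_iff.mp he with ⟨h1, h2⟩ | ⟨h1, h2⟩ <;> simp [h1, h2, parI_add_single]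
  · rintro ⟨h1, h2⟩
    obtain rfl : j = i := by
      by_contra hji
      rw [hd, parI_add_single, if_neg hji, h1] at h2
      exact one_ne_zero (add_eq_left.mp h2)
    exact ⟨d.fst, by rw [hd], h1⟩

theorem parity_balance (n : ℕ) (hn : 2 ≤ n) (i : Fin n) (u : Fin n → ZMod 2)
    (h : (Q n).Walk u u) (hh : h.IsHamiltonianCycle) :
    h.edges.countP (fun e => decide (∃ w : Fin n → ZMod 2,
        e = s(w, w + Pi.single i 1) ∧ parI i w = 0)) =
    h.edges.countP (fun e => decide (∃ w : Fin n → ZMod 2,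
        e = s(w, w + Pi.single i 1) ∧ parI i w = 1)) := by
  have heq_one (a : ZMod 2) : a = 1 ↔ ¬a = 0 := by revert a; decide
  simp only [SimpleGraph.Walk.edges, List.countP_map, Function.comp_def,
    exists_dart_edge_eq_and_parI_eq_iff]
  simp only [heq_one]
  exact hh.countP_darts_and_eq_countP_darts_not_and_not _
    (card_parI_eq_zero_eq_card_parI_ne_zero hn i)
end

section
/- Let n ≥ 2 and i < n, and let h = h_0 h_1 ⋯ h_{2^n - 1} be a Hamiltonian cycle of Q_n (indices taken modulo 2^n) such that {h_0, h_1} is an i-th dimension edge. Let j_0 = 0 < j_1 < ⋯ < j_{c-1} < 2^n be the complete list of indices j for which {h_j, h_{j+1}} is an i-th dimension edge, and set j_c := 2^n. Then the sum of the even-indexed differences equals the sum of the odd-indexed differences and both equal 2^{n-1}: Σ_{k even, 0 ≤ k < c} (j_{k+1} − j_k) = 2^{n-1} = Σ_{k odd, 0 ≤ k < c} (j_{k+1} − j_k). -/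
/-! The `i`-th coordinate of `h_t` changes exactly at the steps `t ∈ J`, so it equals
`h_0 i + #{j ∈ J | j < t}`. Since `j_0 = 0`, on the segment `(j_k, j_{k+1}]` this count is
`k + 1`: the even-indexed segments are exactly the times `t ∈ (0, 2^n]` at which the coordinate
differs from that of `h_0`, the odd-indexed ones those at which it agrees. As `h_1, …, h_{2^n}`
runs once through all vertices, each of the two sets of times has `2^{n-1}` elements. -/

open Finset

theorem Fintype.card_filter_apply_eq {ι κ : Type*} [Fintype ι] [DecidableEq ι] [Fintype κ]
    [DecidableEq κ] (i : ι) (x : κ) :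
    #{f : ι → κ | f i = x} = Fintype.card κ ^ (Fintype.card ι - 1) := by
  simpa using Fintype.card_filter_piFinset_const_eq_of_mem (univ : Finset κ) i (mem_univ x)

theorem sum_segment_lengths_eq_card_filter {β : Type*} [DecidableEq β] (s : ℕ → ℕ)
    (x col : ℕ → β) (b : β) (c : ℕ) (hs : MonotoneOn s (Set.Iic c))
    (hx : ∀ k < c, ∀ t ∈ Ioc (s k) (s (k + 1)), x t = col k) :
    ∑ k ∈ (range c).filter (col · = b), (s (k + 1) - s k) =
      #{t ∈ Ioc (s 0) (s c) | x t = b} := by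
  induction c with
  | zero => simp
  | succ c ih =>
    have hs0 : s 0 ≤ s c := hs (by simp) (by simp) c.zero_le
    have hs1 : s c ≤ s (c + 1) := hs (by simp) (by simp) c.le_succ
    have hdisj : Disjoint (Ioc (s 0) (s c)) (Ioc (s c) (s (c + 1))) :=
      Ioc_disjoint_Ioc_of_le le_rfl
    rw [sum_filter, sum_range_succ, ← sum_filter, ih (hs.mono (Set.Iic_subset_Iic.2 c.le_succ))
      (fun k hk => hx k (hk.trans c.lt_succ_self)), ← Ioc_union_Ioc_eq_Ioc hs0 hs1, filter_union,
      card_union_of_disjoint (disjoint_filter_filter hdisj)]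
    congr 1
    have hxc := hx c c.lt_succ_self
    split_ifs with hc
    · rw [filter_true_of_mem (fun t ht => (hxc t ht).trans hc), Nat.card_Ioc]
    · rw [filter_false_of_mem (fun t ht => (hxc t ht).trans_ne hc), card_empty]

theorem eq_add_card_filter_lt {β : Type*} [AddMonoidWithOne β] (x : ℕ → β) (J : Finset ℕ)
    (N : ℕ) (hx : ∀ t < N, x (t + 1) = x t + if t ∈ J then 1 else 0) :
    ∀ t ≤ N, x t = x 0 + #{j ∈ J | j < t} := by
  intro t ht
  induction t with
  | zero => simp
  | succ t ih =>
    have hcount : #{j ∈ J | j < t + 1} = #{j ∈ J | j < t} + if t ∈ J then 1 else 0 := by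
      simp only [Nat.lt_succ_iff_lt_or_eq, filter_or, filter_eq']
      split_ifs with htJ
      · rw [card_union_of_disjoint (disjoint_singleton_right.2 (by simp)), card_singleton]
      · simp
    rw [hx t ht, ih (by omega), hcount, Nat.cast_add, Nat.cast_ite, Nat.cast_one, Nat.cast_zero,
      add_assoc]

theorem card_filter_image_lt_of_mem_Ioc {s : ℕ → ℕ} {c k t : ℕ}
    (hs : StrictMonoOn s (Set.Iic c)) (hk : k < c) (ht : t ∈ Ioc (s k) (s (k + 1))) :
    #{j ∈ (range c).image s | j < t} = k + 1 := by
  obtain ⟨hkt, htk⟩ := mem_Ioc.1 ht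
  have hbefore : {m ∈ range c | s m < t} = range (k + 1) := by
    ext m
    simp only [mem_filter, mem_range]
    constructor
    · rintro ⟨hm, hmt⟩
      exact (hs.lt_iff_lt (Set.mem_Iic.2 hm.le) (Set.mem_Iic.2 hk)).1 (hmt.trans_le htk)
    · intro hm
      have hsm : s m ≤ s k := hs.monotoneOn (Set.mem_Iic.2 (by omega)) (Set.mem_Iic.2 hk.le)
        (by omega)
      exact ⟨by omega, hsm.trans_lt hkt⟩
  have hinj : Set.InjOn s (range (k + 1)) :=
    hs.injOn.mono fun m hm => Set.mem_Iic.2 (by simp at hm; omega)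
  rw [filter_image, hbefore, card_image_of_injOn hinj, card_range]

namespace Finset

variable (J : Finset ℕ) (N : ℕ)

theorem getD_sort_append_of_lt {k : ℕ} (hk : k < #J) :
    (J.sort (· ≤ ·) ++ [N]).getD k 0 = (J.sort (· ≤ ·))[k]'(by simpa using hk) := by
  rw [List.getD_append _ _ _ _ (by simpa using hk), List.getD_eq_getElem]

theorem getD_sort_append_card : (J.sort (· ≤ ·) ++ [N]).getD #J 0 = N := by
  simp

theorem getD_sort_append_zero (h0 : 0 ∈ J) : (J.sort (· ≤ ·) ++ [N]).getD 0 0 = 0 := by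
  rw [getD_sort_append_of_lt J N (card_pos.2 ⟨0, h0⟩),
    ← min'_eq_sorted_zero (h := ⟨0, h0⟩)]
  exact Nat.le_zero.1 (min'_le J 0 h0)

theorem image_getD_sort_append : (range #J).image ((J.sort (· ≤ ·) ++ [N]).getD · 0) = J := by
  ext j
  simp only [mem_image, mem_range]
  constructor
  · rintro ⟨k, hk, rfl⟩
    rw [getD_sort_append_of_lt J N hk]
    exact (mem_sort _).1 (List.getElem_mem _)
  · intro hj
    obtain ⟨k, hk, rfl⟩ := List.mem_iff_getElem.1 ((mem_sort (· ≤ ·)).2 hj)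
    rw [length_sort] at hk
    exact ⟨k, hk, getD_sort_append_of_lt J N hk⟩

theorem strictMonoOn_getD_sort_append (hJ : ∀ j ∈ J, j < N) :
    StrictMonoOn ((J.sort (· ≤ ·) ++ [N]).getD · 0) (Set.Iic #J) := by
  have hsorted : (J.sort (· ≤ ·) ++ [N]).SortedLT := by
    rw [List.sortedLT_iff_pairwise, List.pairwise_append]
    exact ⟨(sortedLT_sort J).pairwise, List.pairwise_singleton _ _,
      fun a ha b hb => (List.mem_singleton.1 hb) ▸ hJ a ((mem_sort _).1 ha)⟩
  have hlen : (J.sort (· ≤ ·) ++ [N]).length = #J + 1 := by simp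
  intro a ha b hb hab
  dsimp only
  rw [List.getD_eq_getElem _ _ (by rw [hlen]; exact Nat.lt_succ_of_le ha),
    List.getD_eq_getElem _ _ (by rw [hlen]; exact Nat.lt_succ_of_le hb)]
  exact hsorted.getElem_lt_getElem_iff.2 hab

end Finset

namespace SimpleGraph.Walk

variable {V : Type*} [Fintype V] [DecidableEq V] {G : SimpleGraph V} {u : V} {p : G.Walk u u}

theorem IsHamiltonianCycle.image_getVert_Ioc (hp : p.IsHamiltonianCycle) :
    (Ioc 0 p.length).image p.getVert = univ := by
  refine eq_univ_of_forall fun v => ?_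
  obtain ⟨t, rfl, ht⟩ := mem_support_iff_exists_getVert.1 (hp.mem_support v)
  rcases t.eq_zero_or_pos with rfl | ht0
  · have hlen : 0 < p.length := (show 0 < 3 by norm_num).trans_le hp.1.three_le_length
    exact mem_image.2 ⟨p.length, by simpa using hlen⟩
  · exact mem_image_of_mem _ (mem_Ioc.2 ⟨ht0, ht⟩)

theorem IsHamiltonianCycle.card_filter_getVert_Ioc (hp : p.IsHamiltonianCycle) (P : V → Prop)
    [DecidablePred P] : #{t ∈ Ioc 0 p.length | P (p.getVert t)} = #{v | P v} := by
  have hinj : Set.InjOn p.getVert (Ioc 0 p.length) := by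
    rw [← card_image_iff, hp.image_getVert_Ioc, card_univ, Nat.card_Ioc, hp.length_eq,
      Nat.sub_zero]
  rw [← card_image_of_injOn (hinj.mono (filter_subset _ _)), ← filter_image,
    hp.image_getVert_Ioc]

end SimpleGraph.Walk

theorem Q.apply_eq_add_ite_of_adj {n : ℕ} {v w : Fin n → ZMod 2} (hvw : (Q n).Adj v w)
    (i : Fin n) : w i = v i + if isDimEdge i s(v, w) then 1 else 0 := by
  obtain ⟨k, rfl⟩ := hvw
  by_cases hki : k = i
  · subst hki
    simp [if_pos (show isDimEdge k _ from ⟨v, rfl⟩)]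
  rw [if_neg]
  · simp [Ne.symm hki]
  rintro ⟨x, hx⟩
  rcases Sym2.eq_iff.1 hx with ⟨rfl, hxk⟩ | ⟨hvx, rfl⟩
  · simpa [Ne.symm hki] using congrFun hxk i
  · simpa [Ne.symm hki] using congrFun hvx i

theorem Q.getVert_apply_eq_add_card_filter_lt {n : ℕ} {u v : Fin n → ZMod 2}
    (p : (Q n).Walk u v) (i : Fin n) {t : ℕ} (ht : t ≤ p.length) :
    p.getVert t i = u i +
      #{j ∈ (range p.length).filter (fun j => isDimEdge i s(p.getVert j, p.getVert (j + 1))) |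
        j < t} := by
  refine (eq_add_card_filter_lt (p.getVert · i) _ _ (fun t ht => ?_) t ht).trans
    (by rw [p.getVert_zero])
  simp only [mem_filter, mem_range, ht, true_and]
  exact Q.apply_eq_add_ite_of_adj (p.adj_getVert_succ ht) i

theorem chromatic_segments_balance_general (n : ℕ) (i : Fin n)
    (u : Fin n → ZMod 2) (h : (Q n).Walk u u) (hh : h.IsHamiltonianCycle)
    (h0 : isDimEdge i s(h.getVert 0, h.getVert 1)) :
    ∀ J : Finset ℕ, J = (Finset.range (2 ^ n)).filter
        (fun j => isDimEdge i s(h.getVert j, h.getVert (j + 1))) →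
    ∀ L : List ℕ, L = J.sort (· ≤ ·) ++ [2 ^ n] →
      (∑ k ∈ (Finset.range J.card).filter (fun k => Even k),
          (L.getD (k + 1) 0 - L.getD k 0) = 2 ^ (n - 1)) ∧
      (∑ k ∈ (Finset.range J.card).filter (fun k => Odd k),
          (L.getD (k + 1) 0 - L.getD k 0) = 2 ^ (n - 1)) := by
  rintro J hJ L rfl
  set s : ℕ → ℕ := ((J.sort (· ≤ ·) ++ [2 ^ n]).getD · 0)
  have hlen : h.length = 2 ^ n := by simp [hh.length_eq]
  have hmono : StrictMonoOn s (Set.Iic #J) :=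
    J.strictMonoOn_getD_sort_append _ fun j hj => mem_range.1 (mem_filter.1 (hJ ▸ hj)).1
  have hs0 : s 0 = 0 :=
    J.getD_sort_append_zero _ (hJ ▸ mem_filter.2 ⟨mem_range.2 (Nat.two_pow_pos n), h0⟩)
  have hsc : s #J = 2 ^ n := J.getD_sort_append_card _
  have hseg : ∀ k < #J, ∀ t ∈ Ioc (s k) (s (k + 1)),
      h.getVert t i = u i + ((k + 1 : ℕ) : ZMod 2) := by
    intro k hk t ht
    have hts : t ≤ h.length :=
      hlen ▸ hsc ▸ (mem_Ioc.1 ht).2.trans (hmono.monotoneOn (by simpa using hk) (by simp) hk)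
    rw [Q.getVert_apply_eq_add_card_filter_lt h i hts, hlen, ← hJ,
      ← J.image_getD_sort_append (2 ^ n), card_filter_image_lt_of_mem_Ioc hmono hk ht]
  have hsum : ∀ b, ∑ k ∈ (range #J).filter (fun k => u i + ((k + 1 : ℕ) : ZMod 2) = b),
      (s (k + 1) - s k) = 2 ^ (n - 1) := by
    intro b
    rw [sum_segment_lengths_eq_card_filter s _ _ _ _ hmono.monotoneOn hseg, hs0, hsc, ← hlen,
      hh.card_filter_getVert_Ioc (· i = b), Fintype.card_filter_apply_eq]
    simp
  constructor
  · rw [← hsum (u i + 1)]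
    congr 1
    refine filter_congr fun k _ => ?_
    rw [add_right_inj, ZMod.natCast_eq_one_iff_odd, Nat.odd_add_one, Nat.not_odd_iff_even]
  · rw [← hsum (u i)]
    congr 1
    refine filter_congr fun k _ => ?_
    rw [add_eq_left, ZMod.natCast_eq_zero_iff_even, Nat.even_add_one, Nat.not_even_iff_odd]

theorem chromatic_segments_balance (n : ℕ) (hn : 2 ≤ n) (i : Fin n)
    (u : Fin n → ZMod 2) (h : (Q n).Walk u u) (hh : h.IsHamiltonianCycle)
    (h0 : isDimEdge i s(h.getVert 0, h.getVert 1)) :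
    ∀ J : Finset ℕ, J = (Finset.range (2 ^ n)).filter
        (fun j => isDimEdge i s(h.getVert j, h.getVert (j + 1))) →
    ∀ L : List ℕ, L = J.sort (· ≤ ·) ++ [2 ^ n] →
      (∑ k ∈ (Finset.range J.card).filter (fun k => Even k),
          (L.getD (k + 1) 0 - L.getD k 0) = 2 ^ (n - 1)) ∧
      (∑ k ∈ (Finset.range J.card).filter (fun k => Odd k),
          (L.getD (k + 1) 0 - L.getD k 0) = 2 ^ (n - 1)) :=
  chromatic_segments_balance_general n i u h hh h0
end

section
/- Let n ≥ 2 and let h be a Hamiltonian cycle of the hypercube Q_n. If for some i < n the number of i-th dimension edges of h is strictly greater than 2^{n-2}, then h contains a square whose rims are i-th dimension edges: there exist a vertex v and an index j ≠ i such that both {v, v + e_i} and {v + e_j, v + e_i + e_j} are edges of h. -/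
/-! Every `i`-th dimension edge of the cycle has exactly one endpoint with `i`-th coordinate `0`,
and a cycle repeats no edge, so the cycle provides more than `2 ^ (n - 2)` such endpoints. Fix
`j ≠ i` and forget coordinates `i` and `j`: by pigeonhole two of these endpoints become equal,
hence differ only in coordinate `j`, and their edges are opposite sides of a square. -/

open Finset

theorem Finset.exists_ne_eqOn_compl_of_card_lt {ι α : Type*} [Fintype ι] [DecidableEq ι]
    [Fintype α] {S : Finset (ι → α)} (K : Finset ι)
    (hS : Fintype.card α ^ (Fintype.card ι - #K) < #S) :
    ∃ v ∈ S, ∃ w ∈ S, v ≠ w ∧ Set.EqOn v w (K : Set ι)ᶜ := by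
  have hcard : #(univ : Finset ((Kᶜ : Finset ι) → α)) < #S := by
    rwa [card_univ, Fintype.card_fun, Fintype.card_coe, card_compl]
  obtain ⟨v, hv, w, hw, hne, hvw⟩ := exists_ne_map_eq_of_card_lt_of_maps_to hcard
    (f := fun v (k : (Kᶜ : Finset ι)) => v k) (fun _ _ => mem_univ _)
  exact ⟨v, hv, w, hw, hne, fun k hk => congrFun hvw ⟨k, by simpa using hk⟩⟩

theorem eq_add_single_of_ne_of_forall_ne_eq {ι : Type*} [DecidableEq ι] {v w : ι → ZMod 2}
    {j : ι} (hne : v ≠ w) (hvw : ∀ k ≠ j, v k = w k) : w = v + Pi.single j 1 := by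
  have hj : v j ≠ w j := fun h => hne <| funext fun k => by
    rcases eq_or_ne k j with rfl | hk
    exacts [h, hvw k hk]
  funext k
  rcases eq_or_ne k j with rfl | hk
  · rw [Pi.add_apply, Pi.single_eq_same]
    exact (by decide : ∀ a b : ZMod 2, a ≠ b → b = a + 1) _ _ hj
  · simp [hk, hvw k hk]

theorem add_single_add_single {ι : Type*} [DecidableEq ι] (v : ι → ZMod 2) (k : ι) :
    v + Pi.single k 1 + Pi.single k 1 = v := by
  rw [add_assoc, ← Pi.single_add, CharTwo.add_self_eq_zero, Pi.single_zero, add_zero]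

section Hypercube

variable {n : ℕ} {i : Fin n}

theorem isDimEdge_iff_exists_apply_eq_zero {e : Sym2 (Fin n → ZMod 2)} :
    isDimEdge i e ↔ ∃ w : Fin n → ZMod 2, w i = 0 ∧ e = s(w, w + Pi.single i 1) := by
  refine ⟨?_, fun ⟨w, _, he⟩ => ⟨w, he⟩⟩
  rintro ⟨w, rfl⟩
  rcases (by decide : ∀ a : ZMod 2, a = 0 ∨ a = 1) (w i) with hw | hw
  · exact ⟨w, hw, rfl⟩
  · refine ⟨w + Pi.single i 1, by rw [Pi.add_apply, Pi.single_eq_same, hw]; decide, ?_⟩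
    rw [add_single_add_single, Sym2.eq_swap]

theorem injOn_dimEdge :
    Set.InjOn (fun w : Fin n → ZMod 2 => s(w, w + Pi.single i 1)) {w | w i = 0} := by
  intro v hv w hw hvw
  rcases Sym2.eq_iff.1 hvw with ⟨h, -⟩ | ⟨h, -⟩
  · exact h
  · have := congrFun h i
    simp_all

def lowerEnds (i : Fin n) {u v : Fin n → ZMod 2} (p : (Q n).Walk u v) :
    Finset (Fin n → ZMod 2) :=
  {w | w i = 0 ∧ s(w, w + Pi.single i 1) ∈ p.edges}

theorem card_lowerEnds {u : Fin n → ZMod 2} {p : (Q n).Walk u u} (hp : p.IsTrail) :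
    #(lowerEnds i p) = dimCount i p := calc
  #(lowerEnds i p) = #((lowerEnds i p).image fun w => s(w, w + Pi.single i 1)) :=
    (card_image_of_injOn fun v hv w hw => injOn_dimEdge (mem_filter.1 hv).2.1
      (mem_filter.1 hw).2.1).symm
  _ = #(p.edges.filter (isDimEdge i ·)).toFinset := by
    congr 1
    ext e
    simp only [lowerEnds, mem_image, mem_filter, mem_univ, true_and, List.mem_toFinset,
      List.mem_filter, decide_eq_true_eq, isDimEdge_iff_exists_apply_eq_zero]
    constructor
    · rintro ⟨w, ⟨hw, he⟩, rfl⟩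
      exact ⟨he, w, hw, rfl⟩
    · rintro ⟨he, w, hw, rfl⟩
      exact ⟨w, ⟨hw, he⟩, rfl⟩
  _ = dimCount i p := by
    rw [List.toFinset_card_of_nodup (hp.edges_nodup.filter _), dimCount,
      List.countP_eq_length_filter]

end Hypercube

theorem square_of_many_edges (n : ℕ) (hn : 2 ≤ n) (u : Fin n → ZMod 2)
    (h : (Q n).Walk u u) (hh : h.IsHamiltonianCycle) (i : Fin n)
    (hc : 2 ^ (n - 2) < dimCount i h) :
    ∃ (v : Fin n → ZMod 2) (j : Fin n), j ≠ i ∧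
      s(v, v + Pi.single i 1) ∈ h.edges ∧
      s(v + Pi.single j 1, v + Pi.single i 1 + Pi.single j 1) ∈ h.edges := by
  have : Nontrivial (Fin n) := Fin.nontrivial_iff_two_le.2 hn
  obtain ⟨j, hji⟩ := exists_ne i
  have hcard : Fintype.card (ZMod 2) ^ (Fintype.card (Fin n) - #{i, j}) < #(lowerEnds i h) := by
    rwa [ZMod.card, Fintype.card_fin, card_pair hji.symm, card_lowerEnds hh.isCycle.isTrail]
  obtain ⟨v, hv, w, hw, hvw, hagree⟩ := exists_ne_eqOn_compl_of_card_lt {i, j} hcard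
  simp only [lowerEnds, mem_filter, mem_univ, true_and] at hv hw
  have hw_eq : w = v + Pi.single j 1 := by
    refine eq_add_single_of_ne_of_forall_ne_eq hvw fun k hkj => ?_
    rcases eq_or_ne k i with rfl | hki
    · rw [hv.1, hw.1]
    · exact hagree (by simp [hki, hkj])
  refine ⟨v, j, hji, hv.2, ?_⟩
  rw [add_right_comm, ← hw_eq]
  exact hw.2
end

section
/- Let n ≥ 2 and let h be a Hamiltonian cycle of the hypercube Q_n. If for some i < n the number of i-th dimension edges of h is strictly greater than the equi-independence number α_=(Q_{n-1}) of the hypercube Q_{n-1}, then h contains a square whose rims are i-th dimension edges: there exist a vertex v and an index j ≠ i such that both {v, v + e_i} and {v + e_j, v + e_i + e_j} are edges of h. -/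
/-- Parity of a vertex of the hypercube: number of coordinates equal to 1, mod 2. -/
def par {n : ℕ} (v : Fin n → ZMod 2) : ZMod 2 := ∑ j, v j

/-- A finite set of vertices is independent in `G` if no two of its elements are adjacent. -/
def IsIndepFinset {V : Type*} (G : SimpleGraph V) (S : Finset V) : Prop :=
  ∀ u ∈ S, ∀ v ∈ S, ¬ G.Adj u v

/-- The equi-independence number of the hypercube `Q m`: the maximum cardinality of an
independent set containing equally many even-parity and odd-parity vertices. -/
noncomputable def equiIndepNum (m : ℕ) : ℕ :=
  sSup {k : ℕ | ∃ S : Finset (Fin m → ZMod 2), IsIndepFinset (Q m) S ∧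
    (S.filter fun v => par v = 0).card = (S.filter fun v => par v = 1).card ∧
    S.card = k}

/-!
Suppose `h` has no such square. Deleting coordinate `i` from the `i`-th dimension edges of `h`
gives a set `S` of `dimCount i h` vertices of `Q (n - 1)`, and two adjacent vertices of `S` would
lift to a square of `h`, so `S` is independent. To see that `S` is balanced, weight each vertex of
`Q n` by the parity sign of the vertex with coordinate `i` deleted: this sign changes along every
edge except the `i`-th dimension ones, and sums to zero over `Q n` once `n ≥ 2`. Summing the weights
of both ends over the edges of `h` counts every vertex twice and so gives zero; on the other hand
only the `i`-th dimension edges contribute, each with twice the sign of its vertex in `S`.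
-/

open SimpleGraph Finset

def Sym2.sumEnds {V M : Type*} [AddCommMonoid M] (f : V → M) : Sym2 V → M :=
  Sym2.lift ⟨fun a b => f a + f b, fun a b => add_comm (f a) (f b)⟩

namespace SimpleGraph.Walk

variable {V M : Type*} [AddCommMonoid M] [Fintype V] [DecidableEq V] {G : SimpleGraph V} {u : V}
  {p : G.Walk u u}

lemma IsHamiltonianCycle.three_le_card (hp : p.IsHamiltonianCycle) : 3 ≤ Fintype.card V :=
  hp.length_eq ▸ hp.isCycle.three_le_length

lemma IsHamiltonianCycle.sum_support_tail (hp : p.IsHamiltonianCycle) (f : V → M) :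
    (p.support.tail.map f).sum = ∑ v, f v := by
  have hcount := (isHamiltonianCycle_iff_isCycle_and_support_count_tail_eq_one.1 hp).2
  have htail : p.support.tail.toFinset = univ :=
    eq_univ_of_forall fun v => List.mem_toFinset.2 <| List.count_pos_iff.1 <| by simp [hcount v]
  rw [← List.sum_toFinset f hp.isCycle.support_nodup, htail]

lemma IsHamiltonianCycle.sum_edges_sumEnds (hp : p.IsHamiltonianCycle) (f : V → M) :
    ∑ e ∈ p.edges.toFinset, Sym2.sumEnds f e = 2 • ∑ v, f v := by
  have hfst : ((p.darts.map (·.fst)).map f).sum = ∑ v, f v := by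
    rw [map_fst_darts, ← ((tail_support_perm_dropLast_support p).map f).sum_eq,
      hp.sum_support_tail]
  have hsnd : ((p.darts.map (·.snd)).map f).sum = ∑ v, f v := by
    rw [map_snd_darts, hp.sum_support_tail]
  calc ∑ e ∈ p.edges.toFinset, Sym2.sumEnds f e
      = (p.darts.map fun d => f d.fst + f d.snd).sum := by
        rw [List.sum_toFinset _ hp.isCycle.edges_nodup, edges, List.map_map]; rfl
    _ = 2 • ∑ v, f v := by
        rw [List.sum_map_add, two_nsmul]
        simp only [List.map_map] at hfst hsnd
        exact congrArg₂ (· + ·) hfst hsnd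

end SimpleGraph.Walk

section Parity

variable {k : ℕ}

def parSign (w : Fin k → ZMod 2) : ℤ := if par w = 0 then 1 else -1

lemma par_add_single (w : Fin k → ZMod 2) (j : Fin k) :
    par (w + Pi.single j 1) = par w + 1 := by
  simp [par, sum_add_distrib]

lemma parSign_add_single (w : Fin k → ZMod 2) (j : Fin k) :
    parSign (w + Pi.single j 1) = -parSign w := by
  rw [parSign, parSign, par_add_single]
  generalize par w = x
  revert x
  decide

lemma card_filter_par_eq_of_sum_parSign_eq_zero {S : Finset (Fin k → ZMod 2)}
    (hS : ∑ w ∈ S, parSign w = 0) :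
    (S.filter fun w => par w = 0).card = (S.filter fun w => par w = 1).card := by
  have hodd : (S.filter fun w => ¬par w = 0) = S.filter fun w => par w = 1 :=
    filter_congr fun w _ => by generalize par w = x; revert x; decide
  simp only [parSign] at hS
  rw [sum_ite, sum_const, sum_const, hodd] at hS
  simp only [Int.nsmul_eq_mul, mul_one, mul_neg] at hS
  omega

end Parity

lemma single_add_single_self {n : ℕ} (i : Fin n) :
    (Pi.single i 1 : Fin n → ZMod 2) + Pi.single i 1 = 0 := by
  rw [← Pi.single_add, show (1 + 1 : ZMod 2) = 0 from rfl, Pi.single_zero]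

section DimEdges

variable {m : ℕ} (i : Fin (m + 1))

lemma removeNth_add_single_self (v : Fin (m + 1) → ZMod 2) :
    i.removeNth (v + Pi.single i 1) = i.removeNth v := by
  ext j
  simp [Fin.removeNth, Fin.succAbove_ne]

lemma removeNth_add_single_succAbove (v : Fin (m + 1) → ZMod 2) (j : Fin m) :
    i.removeNth (v + Pi.single (i.succAbove j) 1) = i.removeNth v + Pi.single j 1 := by
  ext k
  simp [Fin.removeNth, Pi.single_apply]

lemma insertNth_add_single (w : Fin m → ZMod 2) (j : Fin m) :
    (i.insertNth 0 (w + Pi.single j 1) : Fin (m + 1) → ZMod 2) =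
      i.insertNth 0 w + Pi.single (i.succAbove j) 1 := by
  rw [Fin.insertNth_eq_iff]
  simp [removeNth_add_single_succAbove]

lemma sum_parSign_removeNth (hm : m ≠ 0) :
    ∑ v : Fin (m + 1) → ZMod 2, parSign (i.removeNth v) = 0 := by
  set j := i.succAbove ⟨0, Nat.pos_of_ne_zero hm⟩
  refine sum_ninvolution (· + Pi.single j 1) (fun v => ?_) (fun v _ hv => ?_)
    (fun _ => mem_univ _) (fun v => ?_)
  · rw [removeNth_add_single_succAbove, parSign_add_single, add_neg_cancel]
  · simpa using congrFun hv j
  · rw [add_assoc, single_add_single_self, add_zero]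

def dimEdgeOver (w : Fin m → ZMod 2) : Sym2 (Fin (m + 1) → ZMod 2) :=
  s(i.insertNth 0 w, i.insertNth 0 w + Pi.single i 1)

lemma dimEdgeOver_removeNth (v : Fin (m + 1) → ZMod 2) :
    dimEdgeOver i (i.removeNth v) = s(v, v + Pi.single i 1) := by
  rw [dimEdgeOver, Fin.insertNth_removeNth]
  obtain hv | hv : v i = 0 ∨ v i = 1 := by generalize v i = x; revert x; decide
  · rw [Function.update_eq_self_iff.2 hv.symm]
  · have hupdate : Function.update v i 0 = v + Pi.single i 1 := by
      ext k
      rcases eq_or_ne k i with rfl | hk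
      · simp only [Function.update_self, Pi.add_apply, hv, Pi.single_eq_same]; rfl
      · simp [hk]
    rw [hupdate, add_assoc, single_add_single_self, add_zero, Sym2.eq_swap]

lemma dimEdgeOver_injective : Function.Injective (dimEdgeOver i) := by
  intro w w' hww'
  rcases Sym2.eq_iff.1 hww' with ⟨hfst, -⟩ | ⟨hfst, -⟩
  · simpa using congrArg i.removeNth hfst
  · simpa using congrFun hfst i

lemma isDimEdge_iff_exists_dimEdgeOver {e : Sym2 (Fin (m + 1) → ZMod 2)} :
    isDimEdge i e ↔ ∃ w, dimEdgeOver i w = e := by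
  constructor
  · rintro ⟨v, rfl⟩
    exact ⟨i.removeNth v, dimEdgeOver_removeNth i v⟩
  · rintro ⟨w, rfl⟩
    exact ⟨i.insertNth 0 w, rfl⟩

lemma sumEnds_dimEdgeOver (w : Fin m → ZMod 2) :
    Sym2.sumEnds (fun v => parSign (i.removeNth v)) (dimEdgeOver i w) = 2 * parSign w := by
  simp [Sym2.sumEnds, dimEdgeOver, removeNth_add_single_self, two_mul]

lemma sumEnds_eq_zero_of_not_isDimEdge {e : Sym2 (Fin (m + 1) → ZMod 2)}
    (he : e ∈ (Q (m + 1)).edgeSet) (hi : ¬isDimEdge i e) :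
    Sym2.sumEnds (fun v => parSign (i.removeNth v)) e = 0 := by
  induction e using Sym2.ind with
  | h a b =>
  obtain ⟨j, rfl⟩ : ∃ j, b = a + Pi.single j 1 := he
  obtain ⟨j, rfl⟩ := Fin.exists_succAbove_eq (x := j) (y := i) (by rintro rfl; exact hi ⟨a, rfl⟩)
  simp [Sym2.sumEnds, removeNth_add_single_succAbove, parSign_add_single]

def dimEdgeBases (E : Finset (Sym2 (Fin (m + 1) → ZMod 2))) : Finset (Fin m → ZMod 2) :=
  univ.filter fun w => dimEdgeOver i w ∈ E

variable {i} {E : Finset (Sym2 (Fin (m + 1) → ZMod 2))}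

lemma image_dimEdgeBases : (dimEdgeBases i E).image (dimEdgeOver i) = E.filter (isDimEdge i) := by
  ext e
  simp only [mem_image, dimEdgeBases, mem_filter, mem_univ, true_and,
    isDimEdge_iff_exists_dimEdgeOver]
  constructor
  · rintro ⟨w, hw, rfl⟩
    exact ⟨hw, w, rfl⟩
  · rintro ⟨he, w, rfl⟩
    exact ⟨w, he, rfl⟩

lemma card_dimEdgeBases : #(dimEdgeBases i E) = #(E.filter (isDimEdge i)) := by
  rw [← image_dimEdgeBases, card_image_of_injective _ (dimEdgeOver_injective i)]

lemma sum_sumEnds_eq_two_mul_sum_parSign (hE : ∀ e ∈ E, e ∈ (Q (m + 1)).edgeSet) :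
    ∑ e ∈ E, Sym2.sumEnds (fun v => parSign (i.removeNth v)) e =
      2 * ∑ w ∈ dimEdgeBases i E, parSign w := by
  rw [← sum_filter_add_sum_filter_not E (isDimEdge i),
    sum_eq_zero fun e he => sumEnds_eq_zero_of_not_isDimEdge i
      (hE e (mem_filter.1 he).1) (mem_filter.1 he).2,
    add_zero, ← image_dimEdgeBases, sum_image (dimEdgeOver_injective i).injOn, mul_sum]
  exact sum_congr rfl fun w _ => sumEnds_dimEdgeOver i w

lemma isIndepFinset_dimEdgeBases
    (hE : ∀ (v : Fin (m + 1) → ZMod 2) (j : Fin (m + 1)), j ≠ i → s(v, v + Pi.single i 1) ∈ E →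
      s(v + Pi.single j 1, v + Pi.single i 1 + Pi.single j 1) ∉ E) :
    IsIndepFinset (Q m) (dimEdgeBases i E) := by
  rintro w hw _ hw' ⟨j, rfl⟩
  simp only [dimEdgeBases, mem_filter, mem_univ, true_and] at hw hw'
  rw [dimEdgeOver, insertNth_add_single, add_right_comm] at hw'
  exact hE _ _ (Fin.succAbove_ne i j) hw hw'

end DimEdges

lemma dimCount_eq_card_filter {n : ℕ} (i : Fin n) {u : Fin n → ZMod 2} {p : (Q n).Walk u u}
    (hp : p.IsTrail) : dimCount i p = #(p.edges.toFinset.filter (isDimEdge i)) := by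
  rw [dimCount, List.countP_eq_length_filter,
    ← List.toFinset_card_of_nodup (hp.edges_nodup.filter _), List.toFinset_filter]
  simp

lemma card_le_equiIndepNum {m : ℕ} {S : Finset (Fin m → ZMod 2)} (hS : IsIndepFinset (Q m) S)
    (hbal : #(S.filter fun v => par v = 0) = #(S.filter fun v => par v = 1)) :
    #S ≤ equiIndepNum m := by
  refine le_csSup ⟨Fintype.card (Fin m → ZMod 2), ?_⟩ ⟨S, hS, hbal, rfl⟩
  rintro k ⟨T, -, -, rfl⟩
  exact card_le_univ T

lemma two_le_of_isHamiltonianCycle {n : ℕ} {u : Fin n → ZMod 2} {p : (Q n).Walk u u}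
    (hp : p.IsHamiltonianCycle) : 2 ≤ n := by
  have hcard := hp.three_le_card
  rw [Fintype.card_fun, ZMod.card, Fintype.card_fin] at hcard
  by_contra! hn
  have := Nat.pow_le_pow_right (show 0 < 2 by norm_num) (Nat.le_of_lt_succ hn)
  omega

theorem square_of_equiIndep_bound_general (n : ℕ) (u : Fin n → ZMod 2)
    (h : (Q n).Walk u u) (hh : h.IsHamiltonianCycle) (i : Fin n)
    (hc : equiIndepNum (n - 1) < dimCount i h) :
    ∃ (v : Fin n → ZMod 2) (j : Fin n), j ≠ i ∧
      s(v, v + Pi.single i 1) ∈ h.edges ∧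
      s(v + Pi.single j 1, v + Pi.single i 1 + Pi.single j 1) ∈ h.edges := by
  have hn := two_le_of_isHamiltonianCycle hh
  obtain ⟨m, rfl⟩ : ∃ m, n = m + 1 := ⟨n - 1, by omega⟩
  by_contra! hsq
  have hindep : IsIndepFinset (Q m) (dimEdgeBases i h.edges.toFinset) :=
    isIndepFinset_dimEdgeBases fun v j hj hv => by
      simpa only [List.mem_toFinset] using hsq v j hj (List.mem_toFinset.1 hv)
  have hbal : ∑ w ∈ dimEdgeBases i h.edges.toFinset, parSign w = 0 := by
    have hsum := hh.sum_edges_sumEnds fun v => parSign (i.removeNth v)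
    rw [sum_parSign_removeNth i (by omega), smul_zero, sum_sumEnds_eq_two_mul_sum_parSign
      fun e he => h.edges_subset_edgeSet (List.mem_toFinset.1 he)] at hsum
    omega
  have hcount : dimCount i h = #(dimEdgeBases i h.edges.toFinset) := by
    rw [dimCount_eq_card_filter i hh.isCycle.isTrail, card_dimEdgeBases]
  have := card_le_equiIndepNum hindep (card_filter_par_eq_of_sum_parSign_eq_zero hbal)
  rw [Nat.add_sub_cancel] at hc
  omega

theorem square_of_equiIndep_bound (n : ℕ) (hn : 2 ≤ n) (u : Fin n → ZMod 2)
    (h : (Q n).Walk u u) (hh : h.IsHamiltonianCycle) (i : Fin n)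
    (hc : equiIndepNum (n - 1) < dimCount i h) :
    ∃ (v : Fin n → ZMod 2) (j : Fin n), j ≠ i ∧
      s(v, v + Pi.single i 1) ∈ h.edges ∧
      s(v + Pi.single j 1, v + Pi.single i 1 + Pi.single j 1) ∈ h.edges :=
  square_of_equiIndep_bound_general n u h hh i hc
end

section
/- For every integer n ≥ 3, the set I = { v ∈ (Fin n → ZMod 2) : v_0 = v_1 and v_0 equals the parity of v } is a maximal independent set of the hypercube Q_n of cardinality 2^{n-2}, and it contains exactly 2^{n-3} even-parity vertices and exactly 2^{n-3} odd-parity vertices. -/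
/-!
The set `I` is the kernel of the homomorphism `S v = (v₀ - v₁, v₀ - par v)` to `(ZMod 2)²`.
Flipping coordinate `l` adds `S eₗ` to `S v`; no `S eₗ` vanishes, and `S e₀, S e₁, S e₂` are the
three nonzero elements of `(ZMod 2)²`. Hence no two kernel vertices are adjacent, and every vertex
`w` outside the kernel has a neighbour `w + eₗ` inside it. Being surjective, `S` has fibres of
size `2ⁿ / 4`. The kernel contains the odd vertex `e₀ + e₁ + e₂`, so `(S, par)` is surjective as
well, and the even and odd halves of `I`, its fibres over `(0, 0)` and `(0, 1)`, have `2ⁿ / 8`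
elements each.
-/

open Finset

section Hypercube

variable {n : ℕ}

theorem par_add (u v : Fin n → ZMod 2) : par (u + v) = par u + par v := by
  simp [par, sum_add_distrib]

theorem par_single (i : Fin n) : par (Pi.single i (1 : ZMod 2)) = 1 := by
  simp [par]

@[simps]
def parityHom (n : ℕ) : (Fin n → ZMod 2) →+ ZMod 2 where
  toFun := par
  map_zero' := by simp [par]
  map_add' := par_add

variable {W : Type*}

theorem isIndepFinset_filter_eq_zero [AddZeroClass W] [DecidableEq W]
    (L : (Fin n → ZMod 2) →+ W) (hL : ∀ i, L (Pi.single i 1) ≠ 0) :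
    IsIndepFinset (Q n) {v | L v = 0} := by
  rintro u hu _ hv ⟨i, rfl⟩
  simp only [mem_filter, mem_univ, true_and, map_add] at hu hv
  exact hL i (by simpa [hu] using hv)

theorem IsIndepFinset.eq_filter_eq_zero_of_subset [AddGroup W] [DecidableEq W]
    {L : (Fin n → ZMod 2) →+ W} (hL : ∀ x ≠ 0, ∃ i, L (Pi.single i 1) = x)
    {T : Finset (Fin n → ZMod 2)} (hT : IsIndepFinset (Q n) T)
    (hsub : ({v | L v = 0} : Finset _) ⊆ T) :
    T = ({v | L v = 0} : Finset _) := by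
  refine Subset.antisymm (fun w hw => ?_) hsub
  by_contra hw'
  have hLw : -L w ≠ 0 := by simpa using hw'
  obtain ⟨i, hi⟩ := hL _ hLw
  have hmem : w + Pi.single i 1 ∈ ({v | L v = 0} : Finset _) := by
    simp [hi]
  exact hT w hw _ (hsub hmem) ⟨i, rfl⟩

end Hypercube

section FiberCount

variable {V W : Type*} [AddGroup V] [Fintype V] [AddMonoid W] [Fintype W] [DecidableEq W]

theorem card_fiber_mul_card_of_surjective {f : V →+ W} (hf : Function.Surjective f) (w : W) :
    #{v | f v = w} * Fintype.card W = Fintype.card V := by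
  calc #{v | f v = w} * Fintype.card W
      = ∑ y : W, #{v | f v = y} := by
        rw [sum_congr rfl fun y _ => AddMonoidHom.card_fiber_eq_of_mem_range f (hf y) (hf w),
          sum_const, card_univ, smul_eq_mul, mul_comm]
    _ = Fintype.card V := (card_eq_sum_card_fiberwise fun v _ => mem_univ (f v)).symm

end FiberCount

theorem AddMonoidHom.prod_surjective_of_mem_ker {V W : Type*} [AddGroup V] [AddMonoid W]
    {f : V →+ W} (hf : Function.Surjective f) (p : V →+ ZMod 2) {d : V} (hfd : f d = 0)
    (hpd : p d = 1) : Function.Surjective (f.prod p) := by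
  rintro ⟨w, c⟩
  obtain ⟨v, rfl⟩ := hf w
  by_cases hc : p v = c
  · exact ⟨v, by simp [hc]⟩
  · refine ⟨v + d, ?_⟩
    have : p v + 1 = c := by generalize p v = a at hc; revert a c; decide
    simp [hfd, hpd, this]

section Syndrome

variable {n : ℕ} {i j k : Fin n}

@[simps]
def syndrome (i j : Fin n) : (Fin n → ZMod 2) →+ ZMod 2 × ZMod 2 where
  toFun v := (v i - v j, v i - par v)
  map_zero' := by simp [par]
  map_add' u v := by
    simp only [Pi.add_apply, par_add, Prod.mk_add_mk, Prod.mk.injEq]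
    constructor <;> abel

theorem syndrome_single_ne_zero (hij : i ≠ j) (l : Fin n) :
    syndrome i j (Pi.single l 1) ≠ 0 := by
  by_cases hl : l = i
  · subst hl
    simp [hij.symm]
  · simp [Ne.symm hl, par_single]

theorem exists_syndrome_single_eq (hij : i ≠ j) (hki : k ≠ i) (hkj : k ≠ j)
    (x : ZMod 2 × ZMod 2) (hx : x ≠ 0) : ∃ l, syndrome i j (Pi.single l 1) = x := by
  have hi : syndrome i j (Pi.single i 1) = (1, 0) := by
    simp [hij.symm, par_single]
  have hj : syndrome i j (Pi.single j 1) = (1, 1) := by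
    simp [hij, par_single]
  have hk : syndrome i j (Pi.single k 1) = (0, 1) := by
    simp [hki.symm, hkj.symm, par_single]
  obtain ⟨a, b⟩ := x
  fin_cases a <;> fin_cases b
  · exact absurd rfl hx
  · exact ⟨k, hk⟩
  · exact ⟨i, hi⟩
  · exact ⟨j, hj⟩

theorem syndrome_surjective (hij : i ≠ j) (hki : k ≠ i) (hkj : k ≠ j) :
    Function.Surjective (syndrome i j) := fun x => by
  by_cases hx : x = 0
  · exact ⟨0, by rw [hx, map_zero]⟩
  · obtain ⟨l, hl⟩ := exists_syndrome_single_eq hij hki hkj x hx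
    exact ⟨_, hl⟩

theorem syndrome_prod_parityHom_surjective (hij : i ≠ j) (hki : k ≠ i) (hkj : k ≠ j) :
    Function.Surjective ((syndrome i j).prod (parityHom n)) := by
  refine AddMonoidHom.prod_surjective_of_mem_ker (syndrome_surjective hij hki hkj) (parityHom n)
    (d := Pi.single i 1 + Pi.single j 1 + Pi.single k 1) ?_ ?_
  · simp [hij, hij.symm, hki.symm, hkj.symm, par_add, par_single]
    decide
  · simp only [parityHom_apply, par_add, par_single]
    decide

end Syndrome

theorem explicit_maximal_equi_indep (n : ℕ) (hn : 3 ≤ n) :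
    ∀ I : Finset (Fin n → ZMod 2),
      I = Finset.univ.filter
        (fun v => v ⟨0, by omega⟩ = v ⟨1, by omega⟩ ∧ v ⟨0, by omega⟩ = par v) →
      IsIndepFinset (Q n) I ∧
      (∀ T : Finset (Fin n → ZMod 2), IsIndepFinset (Q n) T → I ⊆ T → T = I) ∧
      I.card = 2 ^ (n - 2) ∧
      (I.filter fun v => par v = 0).card = 2 ^ (n - 3) ∧
      (I.filter fun v => par v = 1).card = 2 ^ (n - 3) := by
  rintro I rfl
  set i : Fin n := ⟨0, by omega⟩
  set j : Fin n := ⟨1, by omega⟩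
  set k : Fin n := ⟨2, by omega⟩
  have hij : i ≠ j := Fin.ne_of_val_ne (by norm_num)
  have hki : k ≠ i := Fin.ne_of_val_ne (by norm_num)
  have hkj : k ≠ j := Fin.ne_of_val_ne (by norm_num)
  have hI : ({v | v i = v j ∧ v i = par v} : Finset _) =
      ({v | syndrome i j v = 0} : Finset _) := by
    ext v
    simp [sub_eq_zero]
  have hsplit (c : ZMod 2) : ({v | syndrome i j v = 0} : Finset _).filter (par · = c) =
      ({v | (syndrome i j).prod (parityHom n) v = (0, c)} : Finset _) := by
    ext v
    simp [Prod.ext_iff]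
  have hcard := card_fiber_mul_card_of_surjective (syndrome_surjective hij hki hkj) 0
  have hcard_split (c : ZMod 2) :=
    card_fiber_mul_card_of_surjective (syndrome_prod_parityHom_surjective hij hki hkj) (0, c)
  simp only [Fintype.card_prod, Fintype.card_pi, ZMod.card, prod_const, card_univ,
    Fintype.card_fin] at hcard hcard_split
  rw [hI, hsplit, hsplit]
  refine ⟨isIndepFinset_filter_eq_zero _ (syndrome_single_ne_zero hij),
    fun T hT hsub => hT.eq_filter_eq_zero_of_subset (exists_syndrome_single_eq hij hki hkj) hsub,
    ?_, ?_, ?_⟩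
  · rw [← pow_sub_mul_pow 2 (by omega : 2 ≤ n)] at hcard
    exact Nat.eq_of_mul_eq_mul_right (by norm_num) hcard
  all_goals
    rw [← pow_sub_mul_pow 2 (by omega : 3 ≤ n)] at hcard_split
    exact Nat.eq_of_mul_eq_mul_right (by norm_num) (hcard_split _)
end

section
/- Let V₀ and V₁ be finite types and let G be a simple graph on V₀ ⊕ V₁ in which every edge joins a vertex of V₀ to a vertex of V₁ (G is bipartite with classes V₀, V₁). Define the graph G' whose vertex set is the set of pairs (v₀, v₁) ∈ V₀ × V₁ that are NOT adjacent in G, two distinct pairs (v₀, v₁) and (v₀', v₁') being adjacent in G' if and only if v₀ = v₀', or v₁ = v₁', or v₀ is adjacent to v₁' in G, or v₁ is adjacent to v₀' in G. Then the maximum cardinality of an independent set of G containing equally many vertices of V₀ and V₁ equals twice the independence number of G': α_=(G) = 2·α(G'). -/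
/-- The independence number of a graph on a finite vertex type. -/
noncomputable def indepNum' {V : Type*} (G : SimpleGraph V) : ℕ :=
  sSup {k : ℕ | ∃ S : Finset V, IsIndepFinset G S ∧ S.card = k}

/-- The equi-independence number of a graph on `V₀ ⊕ V₁`: the maximum cardinality of an
independent set containing equally many vertices of `V₀` and of `V₁`. -/
noncomputable def equiIndepNumBip {V₀ V₁ : Type*} (G : SimpleGraph (V₀ ⊕ V₁)) : ℕ :=
  sSup {k : ℕ | ∃ S : Finset (V₀ ⊕ V₁), IsIndepFinset G S ∧
    (S.filter fun v => v.isLeft = true).card = (S.filter fun v => v.isRight = true).card ∧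
    S.card = k}

/-- The auxiliary graph `G'`: vertices are the non-adjacent pairs `(v₀, v₁) ∈ V₀ × V₁`;
two distinct pairs are adjacent iff they share a first or second coordinate, or one side of
one pair is `G`-adjacent to the other side of the other pair. -/
def auxGraph {V₀ V₁ : Type*} (G : SimpleGraph (V₀ ⊕ V₁)) :
    SimpleGraph {p : V₀ × V₁ // ¬ G.Adj (Sum.inl p.1) (Sum.inr p.2)} where
  Adj p q := p ≠ q ∧ (p.1.1 = q.1.1 ∨ p.1.2 = q.1.2 ∨
    G.Adj (Sum.inl p.1.1) (Sum.inr q.1.2) ∨ G.Adj (Sum.inl q.1.1) (Sum.inr p.1.2))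
  symm := by
    constructor
    rintro p q ⟨hne, hc⟩
    refine ⟨hne.symm, ?_⟩
    rcases hc with hc | hc | hc | hc
    · exact Or.inl hc.symm
    · exact Or.inr (Or.inl hc.symm)
    · exact Or.inr (Or.inr (Or.inr hc))
    · exact Or.inr (Or.inr (Or.inl hc))
  loopless := by
    constructor
    rintro p ⟨hne, -⟩
    exact hne rfl

/-!
An equi-independent set of `G` is `A ⊔ B` with `A ⊆ V₀`, `B ⊆ V₁`, `|A| = |B|` and no edge
between `A` and `B`. Any bijection `A ≃ B` pairs it into `|A|` non-edges of `G`, which are pairwise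
non-adjacent in `G'`. Conversely, in an independent set of `G'` both coordinate projections are
injective and no edge of `G` joins a first coordinate to a second one, so the two images form an
equi-independent set of twice the size. Thus the sizes of equi-independent sets of `G` are exactly
the doubles of the sizes of independent sets of `G'`.
-/

open Finset Sum

lemma Nat.sSup_image_of_monotone {f : ℕ → ℕ} (hf : Monotone f) {s : Set ℕ} (hne : s.Nonempty)
    (hbdd : BddAbove s) : sSup (f '' s) = f (sSup s) :=
  (hf.map_isGreatest ⟨Nat.sSup_mem hne hbdd, fun _ h => le_csSup hbdd h⟩).csSup_eq

lemma bddAbove_setOf_card {X : Type*} [Finite X] (P : Finset X → Prop) :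
    BddAbove {k : ℕ | ∃ S : Finset X, P S ∧ #S = k} := by
  have := Fintype.ofFinite X
  exact ⟨Fintype.card X, by rintro _ ⟨S, -, rfl⟩; exact card_le_univ S⟩

lemma card_filter_isLeft {V₀ V₁ : Type*} (S : Finset (V₀ ⊕ V₁)) :
    #(S.filter fun v => v.isLeft = true) = #S.toLeft := by
  rw [show S.filter (fun v => v.isLeft = true) = S.toLeft.map .inl by ext x; cases x <;> simp,
    card_map]

lemma card_filter_isRight {V₀ V₁ : Type*} (S : Finset (V₀ ⊕ V₁)) :
    #(S.filter fun v => v.isRight = true) = #S.toRight := by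
  rw [show S.filter (fun v => v.isRight = true) = S.toRight.map .inr by ext x; cases x <;> simp,
    card_map]

section

variable {V₀ V₁ : Type*} {G : SimpleGraph (V₀ ⊕ V₁)}

lemma isIndepFinset_disjSum_iff (hbip₀ : ∀ a b : V₀, ¬ G.Adj (inl a) (inl b))
    (hbip₁ : ∀ a b : V₁, ¬ G.Adj (inr a) (inr b)) {s : Finset V₀} {t : Finset V₁} :
    IsIndepFinset G (s.disjSum t) ↔ ∀ a ∈ s, ∀ b ∈ t, ¬ G.Adj (inl a) (inr b) := by
  refine ⟨fun h a ha b hb => h _ (inl_mem_disjSum.2 ha) _ (inr_mem_disjSum.2 hb), ?_⟩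
  rintro h (a | b) hu (a' | b') hv
  · exact hbip₀ a a'
  · exact h a (inl_mem_disjSum.1 hu) b' (inr_mem_disjSum.1 hv)
  · exact fun hadj => h a' (inl_mem_disjSum.1 hv) b (inr_mem_disjSum.1 hu) hadj.symm
  · exact hbip₁ b b'

lemma isIndepFinset_auxGraph_iff {T : Finset {p : V₀ × V₁ // ¬ G.Adj (inl p.1) (inr p.2)}} :
    IsIndepFinset (auxGraph G) T ↔ (∀ p ∈ T, ∀ q ∈ T, p.1.1 = q.1.1 → p = q) ∧
      (∀ p ∈ T, ∀ q ∈ T, p.1.2 = q.1.2 → p = q) ∧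
      ∀ p ∈ T, ∀ q ∈ T, ¬ G.Adj (inl p.1.1) (inr q.1.2) := by
  refine ⟨fun h => ⟨?_, ?_, ?_⟩, ?_⟩
  · intro p hp q hq hpq
    by_contra hne
    exact h p hp q hq ⟨hne, .inl hpq⟩
  · intro p hp q hq hpq
    by_contra hne
    exact h p hp q hq ⟨hne, .inr (.inl hpq)⟩
  · intro p hp q hq hadj
    obtain rfl | hne := eq_or_ne p q
    -- `auxGraph` is loopless, so the case `p = q` is the non-edge condition on `p` itself.
    · exact p.2 hadj
    · exact h p hp q hq ⟨hne, .inr (.inr (.inl hadj))⟩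
  · rintro ⟨hinj₁, hinj₂, hcross⟩ p hp q hq ⟨hne, h | h | h | h⟩
    · exact hne (hinj₁ p hp q hq h)
    · exact hne (hinj₂ p hp q hq h)
    · exact hcross p hp q hq h
    · exact hcross q hq p hp h

lemma exists_equiIndep_of_isIndepFinset_auxGraph (hbip₀ : ∀ a b : V₀, ¬ G.Adj (inl a) (inl b))
    (hbip₁ : ∀ a b : V₁, ¬ G.Adj (inr a) (inr b))
    {T : Finset {p : V₀ × V₁ // ¬ G.Adj (inl p.1) (inr p.2)}} (hT : IsIndepFinset (auxGraph G) T) :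
    ∃ S : Finset (V₀ ⊕ V₁), IsIndepFinset G S ∧
      #(S.filter fun v => v.isLeft = true) = #(S.filter fun v => v.isRight = true) ∧
      #S = 2 * #T := by
  classical
  obtain ⟨hinj₁, hinj₂, hcross⟩ := isIndepFinset_auxGraph_iff.1 hT
  have hcard₁ : #(T.image (·.1.1)) = #T := card_image_of_injOn hinj₁
  have hcard₂ : #(T.image (·.1.2)) = #T := card_image_of_injOn hinj₂
  refine ⟨(T.image (·.1.1)).disjSum (T.image (·.1.2)),
    (isIndepFinset_disjSum_iff hbip₀ hbip₁).2 ?_, ?_, ?_⟩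
  · simpa only [forall_mem_image] using hcross
  · rw [card_filter_isLeft, card_filter_isRight, toLeft_disjSum, toRight_disjSum, hcard₁, hcard₂]
  · rw [card_disjSum, hcard₁, hcard₂, two_mul]

lemma exists_isIndepFinset_auxGraph_of_equiIndep {S : Finset (V₀ ⊕ V₁)} (hS : IsIndepFinset G S)
    (hbal : #(S.filter fun v => v.isLeft = true) = #(S.filter fun v => v.isRight = true)) :
    ∃ T : Finset {p : V₀ × V₁ // ¬ G.Adj (inl p.1) (inr p.2)},
      IsIndepFinset (auxGraph G) T ∧ #S = 2 * #T := by
  rw [card_filter_isLeft, card_filter_isRight] at hbal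
  let e := equivOfCardEq hbal
  have hmatch (a b : S.toLeft) : ¬ G.Adj (inl a) (inr (e b)) :=
    hS _ (mem_toLeft.1 a.2) _ (mem_toRight.1 (e b).2)
  let f (a : S.toLeft) : {p : V₀ × V₁ // ¬ G.Adj (inl p.1) (inr p.2)} := ⟨(a, e a), hmatch a a⟩
  have hf : f.Injective := fun a b h => Subtype.ext (congrArg (fun p => p.1.1) h)
  refine ⟨S.toLeft.attach.map ⟨f, hf⟩, isIndepFinset_auxGraph_iff.2 ⟨?_, ?_, ?_⟩, ?_⟩
  · simp only [forall_mem_map]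
    exact fun a _ b _ h => congrArg f (Subtype.ext h)
  · simp only [forall_mem_map]
    exact fun a _ b _ h => congrArg f (e.injective (Subtype.ext h))
  · simp only [forall_mem_map]
    exact fun a _ b _ => hmatch a b
  · rw [card_map, card_attach, ← card_toLeft_add_card_toRight, ← hbal, two_mul]

lemma setOf_card_equiIndep_eq_image (hbip₀ : ∀ a b : V₀, ¬ G.Adj (inl a) (inl b))
    (hbip₁ : ∀ a b : V₁, ¬ G.Adj (inr a) (inr b)) :
    {k : ℕ | ∃ S : Finset (V₀ ⊕ V₁), IsIndepFinset G S ∧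
      #(S.filter fun v => v.isLeft = true) = #(S.filter fun v => v.isRight = true) ∧ #S = k} =
    (2 * ·) '' {k : ℕ | ∃ T : Finset {p : V₀ × V₁ // ¬ G.Adj (inl p.1) (inr p.2)},
      IsIndepFinset (auxGraph G) T ∧ #T = k} := by
  ext k
  constructor
  · rintro ⟨S, hS, hbal, rfl⟩
    obtain ⟨T, hT, hcard⟩ := exists_isIndepFinset_auxGraph_of_equiIndep hS hbal
    exact ⟨#T, ⟨T, hT, rfl⟩, hcard.symm⟩
  · rintro ⟨_, ⟨T, hT, rfl⟩, rfl⟩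
    exact exists_equiIndep_of_isIndepFinset_auxGraph hbip₀ hbip₁ hT

end

theorem equiIndepNum_eq_two_mul_indepNum {V₀ V₁ : Type*} [Fintype V₀] [Fintype V₁]
    (G : SimpleGraph (V₀ ⊕ V₁))
    (hbip₀ : ∀ a b : V₀, ¬ G.Adj (Sum.inl a) (Sum.inl b))
    (hbip₁ : ∀ a b : V₁, ¬ G.Adj (Sum.inr a) (Sum.inr b)) :
    equiIndepNumBip G = 2 * indepNum' (auxGraph G) := by
  rw [equiIndepNumBip, setOf_card_equiIndep_eq_image hbip₀ hbip₁, indepNum']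
  exact Nat.sSup_image_of_monotone (fun _ _ => Nat.mul_le_mul_left 2)
    ⟨0, ∅, fun _ h => absurd h (notMem_empty _), rfl⟩ (bddAbove_setOf_card _)
end

section
/- The equi-independence number of the 5-dimensional hypercube equals 10: α_=(Q_5) = 10. That is, the maximum cardinality of an independent set of Q_5 containing equally many even-parity and odd-parity vertices is 10. -/
/-!
Four even vertices of `Q 5` always have at least eleven odd neighbours, so at most five odd
vertices are adjacent to none of them. In a balanced independent set with six or more
vertices of each parity, the odd part avoids the neighbourhood of four of its even vertices
and so has at most five elements, a contradiction. The fact about four even vertices is a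
finite check, run on binary encodings of the vertices: there the parity of a vertex is the
parity of the number of set bits, and two vertices are adjacent iff the xor of their codes
is a power of two. For the lower bound, the five even vertices `0` and `e₀ + eᵢ` lie pairwise
at distance two, so together with their antipodes they form an independent set.
-/

open Finset

instance (n : ℕ) : DecidableRel (Q n).Adj := fun u v =>
  inferInstanceAs (Decidable (∃ i : Fin n, v = u + Pi.single i 1))

section OddNonNeighbors

variable {n : ℕ}

def oddNonNeighbors (A : Finset (Fin n → ZMod 2)) : Finset (Fin n → ZMod 2) :=
  {w | par w = 1 ∧ ∀ a ∈ A, ¬ (Q n).Adj a w}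

lemma filter_par_eq_one_subset_oddNonNeighbors {S A : Finset (Fin n → ZMod 2)}
    (hS : IsIndepFinset (Q n) S) (hAS : A ⊆ S) :
    S.filter (par · = 1) ⊆ oddNonNeighbors A := by
  intro w hw
  rw [mem_filter] at hw
  exact mem_filter.mpr ⟨mem_univ w, hw.2, fun a ha => hS a (hAS ha) w hw.1⟩

lemma card_le_two_mul_of_card_oddNonNeighbors_le {k m : ℕ} (hkm : k ≤ m + 1)
    (hA : ∀ A : Finset (Fin n → ZMod 2), (∀ a ∈ A, par a = 0) → #A = k →
      #(oddNonNeighbors A) ≤ m)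
    {S : Finset (Fin n → ZMod 2)} (hS : IsIndepFinset (Q n) S)
    (hbal : #(S.filter (par · = 0)) = #(S.filter (par · = 1))) :
    #S ≤ 2 * m := by
  have hsplit : #(S.filter (par · = 0)) + #(S.filter (par · = 1)) = #S := by
    rw [← card_filter_add_card_filter_not (s := S) (par · = 0)]
    congr 2
    exact filter_congr fun v _ => (by decide : ∀ a : ZMod 2, a = 1 ↔ ¬a = 0) (par v)
  by_cases hk : k ≤ #(S.filter (par · = 0))
  · obtain ⟨A, hAE, hAk⟩ := exists_subset_card_eq hk
    have hAS : A ⊆ S := hAE.trans (filter_subset _ S)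
    have hodd : #(S.filter (par · = 1)) ≤ m :=
      (card_le_card (filter_par_eq_one_subset_oddNonNeighbors hS hAS)).trans
        (hA A (fun a ha => (mem_filter.mp (hAE ha)).2) hAk)
    omega
  · omega

end OddNonNeighbors

section BinaryEncoding

variable {n : ℕ}

def toBits (v : Fin n → ZMod 2) : ℕ := finFunctionFinEquiv (m := 2) v

lemma toBits_lt (v : Fin n → ZMod 2) : toBits v < 2 ^ n :=
  (finFunctionFinEquiv (m := 2) v).isLt

lemma toBits_injective : Function.Injective (toBits (n := n)) :=
  Fin.val_injective.comp finFunctionFinEquiv.injective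

lemma testBit_toBits (v : Fin n → ZMod 2) (i : Fin n) :
    (toBits v).testBit i = decide (v i = 1) := by
  have h := finFunctionFinEquiv_symm_apply_val (m := 2) (finFunctionFinEquiv v) i
  have hv : (finFunctionFinEquiv (m := 2) (n := n)).symm (finFunctionFinEquiv v) = v :=
    Equiv.symm_apply_apply _ _
  rw [hv] at h
  rw [Nat.testBit_eq_decide_div_mod_eq, toBits, ← h]
  exact (by decide : ∀ a : Fin 2, decide ((a : ℕ) = 1) = decide (a = 1)) _

lemma toBits_add (u v : Fin n → ZMod 2) : toBits (u + v) = toBits u ^^^ toBits v := by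
  refine Nat.eq_of_testBit_eq fun j => ?_
  rw [Nat.testBit_xor]
  by_cases hj : j < n
  · obtain ⟨i, rfl⟩ : ∃ i : Fin n, (i : ℕ) = j := ⟨⟨j, hj⟩, rfl⟩
    simp only [testBit_toBits, Pi.add_apply]
    exact (by decide : ∀ a b : ZMod 2,
      decide (a + b = 1) = (decide (a = 1) ^^ decide (b = 1))) _ _
  · have hlt : ∀ w : Fin n → ZMod 2, toBits w < 2 ^ j := fun w =>
      (toBits_lt w).trans_le (Nat.pow_le_pow_right two_pos (not_lt.mp hj))
    simp only [Nat.testBit_lt_two_pow (hlt _), Bool.xor_false]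

lemma toBits_single (i : Fin n) : toBits (Pi.single i (1 : ZMod 2)) = 2 ^ (i : ℕ) :=
  (finFunctionFinEquiv_single (m := 2) i 1).trans (one_mul _)

lemma Q_adj_iff_exists_xor_eq_two_pow {u v : Fin n → ZMod 2} :
    (Q n).Adj u v ↔ ∃ i : Fin n, toBits u ^^^ toBits v = 2 ^ (i : ℕ) := by
  refine exists_congr fun i => ?_
  rw [← toBits_single, ← toBits_injective.eq_iff, toBits_add]
  constructor <;> intro h
  · rw [h, ← Nat.xor_assoc, Nat.xor_self, Nat.zero_xor]
  · rw [← h, ← Nat.xor_assoc, Nat.xor_self, Nat.zero_xor]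

lemma par_eq_count_testBit (v : Fin n → ZMod 2) :
    par v = Nat.count ((toBits v).testBit ·) n := by
  have hv : ∀ j : Fin n, v j = if (toBits v).testBit j then 1 else 0 := fun j => by
    rw [testBit_toBits]
    exact (by decide : ∀ a : ZMod 2, a = if decide (a = 1) then 1 else 0) _
  rw [par, Fintype.sum_congr _ _ hv,
    Fin.sum_univ_eq_sum_range (fun j => if (toBits v).testBit j then (1 : ZMod 2) else 0),
    sum_boole, Nat.count_eq_card_filter_range]

def evenCodes (n : ℕ) : List ℕ :=
  (List.range (2 ^ n)).filter fun a => (Nat.count (a.testBit ·) n : ZMod 2) = 0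

def oddNonNeighborCodes (n : ℕ) (L : List ℕ) : List ℕ :=
  (List.range (2 ^ n)).filter fun w =>
    (Nat.count (w.testBit ·) n : ZMod 2) = 1 ∧ ∀ a ∈ L, ∀ i < n, a ^^^ w ≠ 2 ^ i

lemma sort_image_toBits_mem_sublistsLen {A : Finset (Fin n → ZMod 2)}
    (hA : ∀ a ∈ A, par a = 0) :
    (A.image toBits).sort ∈ (evenCodes n).sublistsLen #A := by
  refine List.mem_sublistsLen.mpr ⟨List.sublist_of_subperm_of_pairwise (r := (· ≤ ·))
    (List.subperm_of_subset (sort_nodup _ _) fun c hc => ?_) (pairwise_sort _ _)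
    ((List.pairwise_lt_range.filter _).imp le_of_lt), ?_⟩
  · obtain ⟨v, hv, rfl⟩ := mem_image.mp ((mem_sort _).mp hc)
    simpa [evenCodes, ← par_eq_count_testBit, hA v hv] using toBits_lt v
  · rw [length_sort, card_image_of_injective _ toBits_injective]

lemma card_oddNonNeighbors_le_length_oddNonNeighborCodes (A : Finset (Fin n → ZMod 2)) :
    #(oddNonNeighbors A) ≤ (oddNonNeighborCodes n (A.image toBits).sort).length := by
  have himage : (oddNonNeighbors A).image toBits ⊆
      (oddNonNeighborCodes n (A.image toBits).sort).toFinset := by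
    intro c hc
    obtain ⟨w, hw, rfl⟩ := mem_image.mp hc
    obtain ⟨hw1, hwA⟩ := (mem_filter.mp hw).2
    refine List.mem_toFinset.mpr (List.mem_filter.mpr ⟨List.mem_range.mpr (toBits_lt w), ?_⟩)
    refine decide_eq_true ⟨par_eq_count_testBit w ▸ hw1, fun a ha i hi hxor => ?_⟩
    obtain ⟨v, hv, rfl⟩ := mem_image.mp ((mem_sort _).mp ha)
    exact hwA v hv (Q_adj_iff_exists_xor_eq_two_pow.mpr ⟨⟨i, hi⟩, hxor⟩)
  calc #(oddNonNeighbors A) = #((oddNonNeighbors A).image toBits) :=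
        (card_image_of_injective _ toBits_injective).symm
    _ ≤ _ := card_le_card himage
    _ ≤ _ := List.toFinset_card_le _

end BinaryEncoding

lemma length_oddNonNeighborCodes_le_five :
    ∀ L ∈ (evenCodes 5).sublistsLen 4, (oddNonNeighborCodes 5 L).length ≤ 5 := by
  decide +kernel

lemma card_oddNonNeighbors_le_five {A : Finset (Fin 5 → ZMod 2)} (hA : ∀ a ∈ A, par a = 0)
    (hcard : #A = 4) : #(oddNonNeighbors A) ≤ 5 :=
  (card_oddNonNeighbors_le_length_oddNonNeighborCodes A).trans <|
    length_oddNonNeighborCodes_le_five _ (hcard ▸ sort_image_toBits_mem_sublistsLen hA)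

def balancedIndepQ5 : Finset (Fin 5 → ZMod 2) :=
  {![0,0,0,0,0], ![1,1,0,0,0], ![1,0,1,0,0], ![1,0,0,1,0], ![1,0,0,0,1],
   ![1,1,1,1,1], ![0,0,1,1,1], ![0,1,0,1,1], ![0,1,1,0,1], ![0,1,1,1,0]}

lemma isIndepFinset_balancedIndepQ5 : IsIndepFinset (Q 5) balancedIndepQ5 := by
  unfold IsIndepFinset
  decide

lemma card_filter_par_balancedIndepQ5 :
    #(balancedIndepQ5.filter (par · = 0)) = #(balancedIndepQ5.filter (par · = 1)) := by
  decide

lemma card_balancedIndepQ5 : #balancedIndepQ5 = 10 := by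
  decide

theorem equiIndepNum_Q5 : equiIndepNum 5 = 10 := by
  refine IsGreatest.csSup_eq ⟨⟨balancedIndepQ5, isIndepFinset_balancedIndepQ5,
    card_filter_par_balancedIndepQ5, card_balancedIndepQ5⟩, ?_⟩
  rintro k ⟨S, hS, hbal, rfl⟩
  exact card_le_two_mul_of_card_oddNonNeighbors_le (k := 4) (by norm_num)
    (fun _ => card_oddNonNeighbors_le_five) hS hbal
end
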